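/- arXiv:2006.14450 — 3 statements merged into one kernel-verified Lean document; each statement's English description precedes it below -/
import Mathlib

section
/- Let the training data satisfy ‖x_i‖₂ = 1 for i = 1,…,n, and let (a(t), B(t)) be a differentiable solution of the GD-conventional flow. Then for every j ∈ {1,…,m} and every t, the inner-layer velocity satisfies ‖ḃ_j(t)‖₂ ≤ √(ĤR_n(a(t), B(t))) · |a_j(t)|, where ĤR_n denotes the empirical risk. -/
open MeasureTheory Real Finset
open scoped BigOperators ENNReal RealInnerProductSpace NNReal

noncomputable section

/-- ReLU activation. -/
def relu (t : ℝ) : ℝ := max t 0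

/-- σ′(t) = 1_{t>0}. -/
def reluD (t : ℝ) : ℝ := if 0 < t then 1 else 0

/-- Gaussian measure on `EuclideanSpace ℝ (Fin d)` with i.i.d. `N(0, v)` coordinates. -/
def gaussianPi (d : ℕ) (v : ℝ≥0) : Measure (EuclideanSpace ℝ (Fin d)) :=
  Measure.map (MeasurableEquiv.toLp 2 (Fin d → ℝ))
    (Measure.pi fun _ : Fin d => ProbabilityTheory.gaussianReal 0 v)

instance (d : ℕ) (v : ℝ≥0) : IsProbabilityMeasure (gaussianPi d v) :=
  Measure.isProbabilityMeasure_map (MeasurableEquiv.measurable _).aemeasurable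

/-- The uniform probability distribution π₀ on the unit sphere `S^{d-1}`,
realized as the pushforward of the standard Gaussian under `x ↦ x / ‖x‖`. -/
def unifSphere (d : ℕ) : Measure (EuclideanSpace ℝ (Fin d)) :=
  Measure.map (fun x => ‖x‖⁻¹ • x) (gaussianPi d 1)

/-- Initialization measure for `B(0)`: rows i.i.d. `N(0, I_d / d)`. -/
def initMeasure (d m : ℕ) : Measure (Fin m → EuclideanSpace ℝ (Fin d)) :=
  Measure.pi fun _ : Fin m => gaussianPi d (1 / d : ℝ≥0)

/-- Two-layer network under conventional scaling. -/
def fnet {d m : ℕ} (a : Fin m → ℝ) (B : Fin m → EuclideanSpace ℝ (Fin d))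
    (x : EuclideanSpace ℝ (Fin d)) : ℝ :=
  ∑ j, a j * relu ⟪B j, x⟫

/-- Empirical risk. -/
def empRisk {d m n : ℕ} (X : Fin n → EuclideanSpace ℝ (Fin d)) (y : Fin n → ℝ)
    (a : Fin m → ℝ) (B : Fin m → EuclideanSpace ℝ (Fin d)) : ℝ :=
  (1 / n) * ∑ i, (fnet a B (X i) - y i) ^ 2

/-- GD-conventional flow. -/
def IsGDFlow {d m n : ℕ} (X : Fin n → EuclideanSpace ℝ (Fin d)) (y : Fin n → ℝ)
    (a : ℝ → Fin m → ℝ) (B : ℝ → Fin m → EuclideanSpace ℝ (Fin d)) : Prop :=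
  ∀ t : ℝ, ∀ j : Fin m,
    HasDerivAt (fun s => a s j)
      (-(1 / n : ℝ) * ∑ i, (fnet (a t) (B t) (X i) - y i) * relu ⟪B t j, X i⟫) t ∧
    HasDerivAt (fun s => B s j)
      ((-(1 / n : ℝ)) • ∑ i, ((fnet (a t) (B t) (X i) - y i) * a t j
          * reluD ⟪B t j, X i⟫) • X i) t

/-- The Gram matrix K. -/
def gramMatrix {d n : ℕ} (X : Fin n → EuclideanSpace ℝ (Fin d)) :
    Matrix (Fin n) (Fin n) ℝ :=
  Matrix.of fun i j => (1 / n : ℝ) *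
    ∫ b, relu ⟪X i, b⟫ * relu ⟪X j, b⟫ ∂(unifSphere d)


lemma abs_reluD_le_one (t : ℝ) : |reluD t| ≤ 1 := by
  unfold reluD
  split_ifs <;> norm_num

lemma norm_sum_smul_le_sum_abs {ι E : Type*} [NormedAddCommGroup E] [NormedSpace ℝ E]
    (s : Finset ι) (c : ι → ℝ) (x : ι → E) (hx : ∀ i ∈ s, ‖x i‖ ≤ 1) :
    ‖∑ i ∈ s, c i • x i‖ ≤ ∑ i ∈ s, |c i| :=
  (norm_sum_le _ _).trans <| sum_le_sum fun i hi => by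
    rw [norm_smul, Real.norm_eq_abs]
    exact mul_le_of_le_one_right (abs_nonneg _) (hx i hi)

lemma mean_abs_le_sqrt_mean_sq {ι : Type*} (s : Finset ι) (r : ι → ℝ) :
    (1 / #s : ℝ) * ∑ i ∈ s, |r i| ≤ √((1 / #s) * ∑ i ∈ s, r i ^ 2) := by
  rcases s.eq_empty_or_nonempty with rfl | hs
  · simp
  have hN : (0 : ℝ) < #s := by exact_mod_cast hs.card_pos
  have hcs : (∑ i ∈ s, |r i|) ^ 2 ≤ #s * ∑ i ∈ s, r i ^ 2 := by
    simpa only [sq_abs] using sq_sum_le_card_mul_sum_sq (s := s) (f := fun i => |r i|)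
  apply Real.le_sqrt_of_sq_le
  calc ((1 / #s : ℝ) * ∑ i ∈ s, |r i|) ^ 2 = (1 / #s) ^ 2 * (∑ i ∈ s, |r i|) ^ 2 := by ring
    _ ≤ (1 / #s) ^ 2 * (#s * ∑ i ∈ s, r i ^ 2) := by gcongr
    _ = (1 / #s) * ∑ i ∈ s, r i ^ 2 := by field_simp

/-- along the GD-conventional flow, the inner-layer velocity obeys
`‖ḃ_j(t)‖ ≤ √(R̂_n(a(t),B(t))) |a_j(t)|`. -/
theorem inner_layer_speed_bound (d m n : ℕ)
    (X : Fin n → EuclideanSpace ℝ (Fin d)) (y : Fin n → ℝ)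
    (hX : ∀ i, ‖X i‖ = 1)
    (a : ℝ → Fin m → ℝ) (B : ℝ → Fin m → EuclideanSpace ℝ (Fin d))
    (hflow : IsGDFlow X y a B) (j : Fin m) (t : ℝ) :
    ∀ v : EuclideanSpace ℝ (Fin d), HasDerivAt (fun s => B s j) v t →
      ‖v‖ ≤ Real.sqrt (empRisk X y (a t) (B t)) * |a t j| := by
  intro v hv
  set r : Fin n → ℝ := fun i => fnet (a t) (B t) (X i) - y i
  calc ‖v‖ = (1 / n) * ‖∑ i, (r i * a t j * reluD ⟪B t j, X i⟫) • X i‖ := by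
        rw [hv.unique (hflow t j).2, norm_smul, norm_neg, Real.norm_of_nonneg (by positivity)]
    _ ≤ (1 / n) * ∑ i, |r i * a t j * reluD ⟪B t j, X i⟫| := by
        gcongr
        exact norm_sum_smul_le_sum_abs _ _ _ fun i _ => (hX i).le
    _ ≤ (1 / n) * ∑ i, |r i| * |a t j| := by
        gcongr with i
        rw [abs_mul, abs_mul]
        exact mul_le_of_le_one_right (by positivity) (abs_reluD_le_one _)
    _ = ((1 / n) * ∑ i, |r i|) * |a t j| := by rw [← Finset.sum_mul, mul_assoc]
    _ ≤ √(empRisk X y (a t) (B t)) * |a t j| := by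
        gcongr
        simpa only [empRisk, card_univ, Fintype.card_fin] using mean_abs_le_sqrt_mean_sq univ r
end
end

section
/- Let (a(t), B(t)) be a differentiable solution of the GD-MF flow on ℝ for training data (x_i, y_i), i = 1,…,n. Define â(s) := a(ms)/√m and B̂(s) := B(ms)/√m. Then (â(s), B̂(s)) is a solution of the GD-conventional flow, its initial condition satisfies â(0) = a(0)/√m and B̂(0) = B(0)/√m, and for every s ∈ ℝ and every x ∈ ℝ^d the two trajectories represent the same function: Σ_{j=1}^m â_j(s) σ(b̂_j(s)ᵀx) = (1/m) Σ_{j=1}^m a_j(ms) σ(b_j(ms)ᵀx). -/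
open MeasureTheory Real Finset
open scoped BigOperators ENNReal RealInnerProductSpace NNReal

noncomputable section

/-- Two-layer network under mean-field scaling. -/
def fnetMF {d m : ℕ} (a : Fin m → ℝ) (B : Fin m → EuclideanSpace ℝ (Fin d))
    (x : EuclideanSpace ℝ (Fin d)) : ℝ :=
  (1 / m : ℝ) * ∑ j, a j * relu ⟪B j, x⟫

/-- GD-MF flow. -/
def IsMFFlow {d m n : ℕ} (X : Fin n → EuclideanSpace ℝ (Fin d)) (y : Fin n → ℝ)
    (a : ℝ → Fin m → ℝ) (B : ℝ → Fin m → EuclideanSpace ℝ (Fin d)) : Prop :=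
  ∀ t : ℝ, ∀ j : Fin m,
    HasDerivAt (fun s => a s j)
      (-(1 / (m * n) : ℝ) *
        ∑ i, (fnetMF (a t) (B t) (X i) - y i) * relu ⟪B t j, X i⟫) t ∧
    HasDerivAt (fun s => B s j)
      ((-(1 / (m * n) : ℝ)) • ∑ i, ((fnetMF (a t) (B t) (X i) - y i) * a t j
          * reluD ⟪B t j, X i⟫) • X i) t

/-!
The network output `Σ a_j σ(b_jᵀx)` is homogeneous of degree two in `(a, B)`, so at
`(a / √m, B / √m)` it equals the mean-field output `(1/m) Σ a_j σ(b_jᵀx)`. By the degree-one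
homogeneity of `σ` and degree-zero homogeneity of `σ′`, every conventional gradient component
at the rescaled point is `1/√m` times the corresponding unscaled one, which is exactly what the
chain rule produces from the mean-field velocity `-(1/(mn)) ⋯` under `t = m s`: a factor
`m / √m`.
-/

lemma relu_mul_of_nonneg {c : ℝ} (hc : 0 ≤ c) (t : ℝ) : relu (c * t) = c * relu t := by
  simp only [relu, mul_max_of_nonneg _ _ hc, mul_zero]

lemma reluD_mul_of_pos {c : ℝ} (hc : 0 < c) (t : ℝ) : reluD (c * t) = reluD t := by
  simp only [reluD, mul_pos_iff_of_pos_left hc]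

lemma relu_inner_inv_smul {d : ℕ} {c : ℝ} (hc : 0 ≤ c) (b x : EuclideanSpace ℝ (Fin d)) :
    relu ⟪c⁻¹ • b, x⟫ = c⁻¹ * relu ⟪b, x⟫ := by
  rw [real_inner_smul_left, relu_mul_of_nonneg (inv_nonneg.2 hc)]

lemma fnet_div_sqrt_inv_smul {d m : ℕ} (a : Fin m → ℝ) (B : Fin m → EuclideanSpace ℝ (Fin d))
    (x : EuclideanSpace ℝ (Fin d)) :
    fnet (fun j => a j / √m) (fun j => (√m)⁻¹ • B j) x = fnetMF a B x := by
  simp only [fnet, fnetMF, relu_inner_inv_smul (sqrt_nonneg _), mul_sum]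
  refine sum_congr rfl fun j _ => ?_
  have hm : (1 / m : ℝ) = (√m)⁻¹ ^ 2 := by rw [inv_pow, sq_sqrt (Nat.cast_nonneg _), one_div]
  rw [hm]
  ring

theorem isGDFlow_of_isMFFlow {d m n : ℕ} {X : Fin n → EuclideanSpace ℝ (Fin d)} {y : Fin n → ℝ}
    {a : ℝ → Fin m → ℝ} {B : ℝ → Fin m → EuclideanSpace ℝ (Fin d)} (hflow : IsMFFlow X y a B) :
    IsGDFlow X y (fun s j => a (m * s) j / √m) (fun s j => (√m)⁻¹ • B (m * s) j) := by
  intro s j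
  have hm : (m : ℝ) ≠ 0 := Nat.cast_ne_zero.2 j.pos.ne'
  have hsqrt : 0 < √m := sqrt_pos.2 (Nat.cast_pos.2 j.pos)
  obtain ⟨ha, hB⟩ := hflow (m * s) j
  simp only [fnet_div_sqrt_inv_smul]
  constructor
  · refine ((ha.comp s (hasDerivAt_const_mul (m : ℝ))).div_const √m).congr_deriv ?_
    simp only [relu_inner_inv_smul hsqrt.le, mul_left_comm _ (√m)⁻¹, ← mul_sum]
    field_simp
  · refine ((hB.scomp s (hasDerivAt_const_mul (m : ℝ))).const_smul (√m)⁻¹).congr_deriv ?_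
    simp only [real_inner_smul_left, reluD_mul_of_pos (inv_pos.2 hsqrt), smul_sum, smul_smul]
    refine sum_congr rfl fun i _ => ?_
    field_simp

theorem mf_to_conventional_general (d m n : ℕ)
    (X : Fin n → EuclideanSpace ℝ (Fin d)) (y : Fin n → ℝ)
    (a : ℝ → Fin m → ℝ) (B : ℝ → Fin m → EuclideanSpace ℝ (Fin d))
    (hflow : IsMFFlow X y a B) :
    IsGDFlow X y (fun s j => a (m * s) j / Real.sqrt m)
        (fun s j => (Real.sqrt m)⁻¹ • B (m * s) j) ∧
      (∀ j : Fin m,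
        (fun s (j : Fin m) => a (m * s) j / Real.sqrt m) 0 j =
            a 0 j / Real.sqrt m ∧
          (fun s (j : Fin m) => (Real.sqrt m)⁻¹ • B (m * s) j) 0 j =
            (Real.sqrt m)⁻¹ • B 0 j) ∧
      ∀ (s : ℝ) (x : EuclideanSpace ℝ (Fin d)),
        fnet (fun j => a (m * s) j / Real.sqrt m)
            (fun j => (Real.sqrt m)⁻¹ • B (m * s) j) x =
          fnetMF (a (m * s)) (B (m * s)) x := by
  refine ⟨isGDFlow_of_isMFFlow hflow, fun j => ?_, fun s x => fnet_div_sqrt_inv_smul _ _ x⟩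
  simp only [mul_zero, and_self]

/-- rescaling a GD-MF trajectory by `â(s) = a(ms)/√m`,
`B̂(s) = B(ms)/√m` yields a GD-conventional trajectory representing the same
function. -/
theorem mf_to_conventional (d m n : ℕ) (hm : 1 ≤ m) (hn : 1 ≤ n)
    (X : Fin n → EuclideanSpace ℝ (Fin d)) (y : Fin n → ℝ)
    (a : ℝ → Fin m → ℝ) (B : ℝ → Fin m → EuclideanSpace ℝ (Fin d))
    (hflow : IsMFFlow X y a B) :
    IsGDFlow X y (fun s j => a (m * s) j / Real.sqrt m)
        (fun s j => (Real.sqrt m)⁻¹ • B (m * s) j) ∧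
      (∀ j : Fin m,
        (fun s (j : Fin m) => a (m * s) j / Real.sqrt m) 0 j =
            a 0 j / Real.sqrt m ∧
          (fun s (j : Fin m) => (Real.sqrt m)⁻¹ • B (m * s) j) 0 j =
            (Real.sqrt m)⁻¹ • B 0 j) ∧
      ∀ (s : ℝ) (x : EuclideanSpace ℝ (Fin d)),
        fnet (fun j => a (m * s) j / Real.sqrt m)
            (fun j => (Real.sqrt m)⁻¹ • B (m * s) j) x =
          fnetMF (a (m * s)) (B (m * s)) x :=
  mf_to_conventional_general d m n X y a B hflow
end
end

section
/- Let (â(s), B̂(s)) be a differentiable solution of the GD-conventional flow on ℝ for training data (x_i, y_i), i = 1,…,n. Define a(t) := √m · â(t/m) and B(t) := √m · B̂(t/m). Then (a(t), B(t)) is a solution of the GD-MF flow; together with the forward direction, this establishes a one-to-one correspondence between trajectories of the GD-MF flow and trajectories of the GD-conventional flow. -/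
open MeasureTheory Real Finset
open scoped BigOperators ENNReal RealInnerProductSpace NNReal

noncomputable section

lemma fnet_smul_smul {d m : ℕ} {c : ℝ} (hc : 0 ≤ c) (a : Fin m → ℝ)
    (B : Fin m → EuclideanSpace ℝ (Fin d)) (x : EuclideanSpace ℝ (Fin d)) :
    fnet (c • a) (c • B) x = c ^ 2 * fnet a B x := by
  simp only [fnet, Finset.mul_sum, Pi.smul_apply, smul_eq_mul, real_inner_smul_left,
    relu_mul_of_nonneg hc]
  exact Finset.sum_congr rfl fun _ _ => by ring

lemma fnetMF_eq_inv_mul_fnet {d m : ℕ} (a : Fin m → ℝ) (B : Fin m → EuclideanSpace ℝ (Fin d))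
    (x : EuclideanSpace ℝ (Fin d)) : fnetMF a B x = (1 / m : ℝ) * fnet a B x := rfl

lemma fnetMF_sqrt_smul_sqrt_smul {d m : ℕ} (hm : m ≠ 0) (a : Fin m → ℝ)
    (B : Fin m → EuclideanSpace ℝ (Fin d)) (x : EuclideanSpace ℝ (Fin d)) :
    fnetMF (√m • a) (√m • B) x = fnet a B x := by
  have hm0 : (m : ℝ) ≠ 0 := by positivity
  rw [fnetMF_eq_inv_mul_fnet, fnet_smul_smul (Real.sqrt_nonneg _), Real.sq_sqrt (Nat.cast_nonneg _),
    ← mul_assoc, one_div_mul_cancel hm0, one_mul]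

lemma HasDerivAt.const_smul_comp_div {E : Type*} [NormedAddCommGroup E] [NormedSpace ℝ E]
    {f : ℝ → E} {f' : E} (c k : ℝ) {t : ℝ} (hf : HasDerivAt f f' (t / k)) :
    HasDerivAt (fun s => c • f (s / k)) ((c / k) • f') t := by
  have hdiv : HasDerivAt (fun s : ℝ => s / k) (1 / k) t := by
    simpa using (hasDerivAt_id t).div_const k
  have h := (hf.scomp t hdiv).const_smul c
  rwa [smul_smul, ← div_eq_mul_one_div] at h

theorem conventional_to_mf_general (d m n : ℕ) (hm : 1 ≤ m)
    (X : Fin n → EuclideanSpace ℝ (Fin d)) (y : Fin n → ℝ)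
    (ahat : ℝ → Fin m → ℝ) (Bhat : ℝ → Fin m → EuclideanSpace ℝ (Fin d))
    (hflow : IsGDFlow X y ahat Bhat) :
    IsMFFlow X y (fun t j => Real.sqrt m * ahat (t / m) j)
      (fun t j => Real.sqrt m • Bhat (t / m) j) := by
  intro t j
  obtain ⟨ha, hB⟩ := hflow (t / m) j
  have hsqrt : 0 < √(m : ℝ) := Real.sqrt_pos.mpr (by exact_mod_cast hm)
  have hfnet (x) : fnetMF (fun j => √m * ahat (t / m) j) (fun j => √m • Bhat (t / m) j) x =
      fnet (ahat (t / m)) (Bhat (t / m)) x := fnetMF_sqrt_smul_sqrt_smul (by omega) _ _ x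
  refine ⟨(ha.const_smul_comp_div √m m).congr_deriv ?_,
    (hB.const_smul_comp_div √m m).congr_deriv ?_⟩
  · simp only [hfnet, real_inner_smul_left, relu_mul_of_nonneg hsqrt.le, smul_eq_mul,
      Finset.mul_sum]
    exact Finset.sum_congr rfl fun i _ => by ring
  · simp only [hfnet, real_inner_smul_left, reluD_mul_of_pos hsqrt, Finset.smul_sum, smul_smul]
    exact Finset.sum_congr rfl fun i _ => congrArg (· • X i) (by ring)

/-- rescaling a GD-conventional trajectory by `a(t) = √m · â(t/m)`,
`B(t) = √m · B̂(t/m)` yields a GD-MF trajectory (the inverse of the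
correspondence of the forward direction). -/
theorem conventional_to_mf (d m n : ℕ) (hm : 1 ≤ m) (hn : 1 ≤ n)
    (X : Fin n → EuclideanSpace ℝ (Fin d)) (y : Fin n → ℝ)
    (ahat : ℝ → Fin m → ℝ) (Bhat : ℝ → Fin m → EuclideanSpace ℝ (Fin d))
    (hflow : IsGDFlow X y ahat Bhat) :
    IsMFFlow X y (fun t j => Real.sqrt m * ahat (t / m) j)
      (fun t j => Real.sqrt m • Bhat (t / m) j) :=
  conventional_to_mf_general d m n hm X y ahat Bhat hflow
end
end
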